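/- Let P be a g-weakly 2-absorbing ideal of a G-graded ring R and suppose 0 ≠ A_g B_g K_g ⊆ P for graded ideals A, B, K of R such that P is free g-triple-zero with respect to ABK. Then A_g K_g ⊆ P or B_g K_g ⊆ P or A_g B_g ⊆ P. -/
import Mathlib


variable {G R : Type*} [AddGroup G] [DecidableEq G] [Ring R]

/-- A two-sided ideal is graded if it contains all homogeneous components of its elements. -/
def IsGradedIdeal (𝒜 : G → AddSubgroup R) [GradedRing 𝒜] (P : TwoSidedIdeal R) : Prop :=
  ∀ a ∈ P, ∀ g : G, (DirectSum.decompose 𝒜 a g : R) ∈ P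

/-- `P` is a `g`-2-absorbing ideal: `P` is a graded ideal with `P_g ≠ R_g`, and for
`x, y, z ∈ R_g`, `x R_e y R_e z ⊆ P` implies `xy ∈ P` or `yz ∈ P` or `xz ∈ P`. -/
def IsG2Absorbing (𝒜 : G → AddSubgroup R) [GradedRing 𝒜] (g : G) (P : TwoSidedIdeal R) : Prop :=
  IsGradedIdeal 𝒜 P ∧ (∃ x ∈ 𝒜 g, x ∉ P) ∧
    ∀ x y z : R, x ∈ 𝒜 g → y ∈ 𝒜 g → z ∈ 𝒜 g →
      (∀ r s : R, r ∈ 𝒜 0 → s ∈ 𝒜 0 → x * r * y * s * z ∈ P) →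
      x * y ∈ P ∨ y * z ∈ P ∨ x * z ∈ P

/-- `P` is a `g`-weakly 2-absorbing ideal: `P` is a graded ideal with `P_g ≠ R_g`, and for
`x, y, z ∈ R_g`, `0 ≠ x R_e y R_e z ⊆ P` implies `xy ∈ P` or `yz ∈ P` or `xz ∈ P`. -/
def IsGWeakly2Absorbing (𝒜 : G → AddSubgroup R) [GradedRing 𝒜] (g : G)
    (P : TwoSidedIdeal R) : Prop :=
  IsGradedIdeal 𝒜 P ∧ (∃ x ∈ 𝒜 g, x ∉ P) ∧
    ∀ x y z : R, x ∈ 𝒜 g → y ∈ 𝒜 g → z ∈ 𝒜 g →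
      (∃ r s : R, r ∈ 𝒜 0 ∧ s ∈ 𝒜 0 ∧ x * r * y * s * z ≠ 0) →
      (∀ r s : R, r ∈ 𝒜 0 → s ∈ 𝒜 0 → x * r * y * s * z ∈ P) →
      x * y ∈ P ∨ y * z ∈ P ∨ x * z ∈ P

/-- `(x, y, z)` is a `g`-triple-zero of `P`: `x, y, z ∈ R_g`, `x R_e y R_e z = 0`,
`xy ∉ P`, `yz ∉ P` and `xz ∉ P`. -/
def IsGTripleZero (𝒜 : G → AddSubgroup R) (g : G) (P : TwoSidedIdeal R) (x y z : R) : Prop :=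
  x ∈ 𝒜 g ∧ y ∈ 𝒜 g ∧ z ∈ 𝒜 g ∧
    (∀ r s : R, r ∈ 𝒜 0 → s ∈ 𝒜 0 → x * r * y * s * z = 0) ∧
    x * y ∉ P ∧ y * z ∉ P ∧ x * z ∉ P

/-- If a "union of two subgroup-like conditions" covers `p`, one of them covers `p`. -/
private lemma union_trick (P : TwoSidedIdeal R) (p : R → Prop)
    (hp : ∀ x y, p x → p y → p (x + y)) (f h : R → R)
    (hf : ∀ x y, f (x + y) = f x + f y) (hh : ∀ x y, h (x + y) = h x + h y)
    (H : ∀ x, p x → f x ∈ P ∨ h x ∈ P) :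
    (∀ x, p x → f x ∈ P) ∨ (∀ x, p x → h x ∈ P) := by
  by_contra hc
  push_neg at hc
  obtain ⟨⟨x1, px1, hx1⟩, ⟨x2, px2, hx2⟩⟩ := hc
  have h1 : h x1 ∈ P := (H x1 px1).resolve_left hx1
  have h2 : f x2 ∈ P := (H x2 px2).resolve_right hx2
  rcases H (x1 + x2) (hp _ _ px1 px2) with h3 | h3
  · rw [hf] at h3
    exact hx1 (by simpa using P.sub_mem h3 h2)
  · rw [hh] at h3
    exact hx2 (by simpa using P.sub_mem h3 h1)

/-- The purely combinatorial core of the theorem. -/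
private lemma combin (P : TwoSidedIdeal R) (pA pB pK : R → Prop)
    (hpA : ∀ x y, pA x → pA y → pA (x + y))
    (hpB : ∀ x y, pB x → pB y → pB (x + y))
    (hpK : ∀ x y, pK x → pK y → pK (x + y))
    (F : ∀ a b k, pA a → pB b → pK k → a * b ∈ P ∨ b * k ∈ P ∨ a * k ∈ P) :
    (∀ a k, pA a → pK k → a * k ∈ P) ∨
    (∀ b k, pB b → pK k → b * k ∈ P) ∨
    (∀ a b, pA a → pB b → a * b ∈ P) := by
  have S1 : ∀ a b, pA a → pB b → a * b ∉ P →
      (∀ k, pK k → a * k ∈ P) ∨ (∀ k, pK k → b * k ∈ P) := by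
    intro a b ha hb hab
    exact union_trick P pK hpK (fun k => a * k) (fun k => b * k)
      (fun x y => mul_add a x y) (fun x y => mul_add b x y)
      (fun k hk => ((F a b k ha hb hk).resolve_left hab).symm)
  have S1' : ∀ a k, pA a → pK k → a * k ∉ P →
      (∀ b, pB b → a * b ∈ P) ∨ (∀ b, pB b → b * k ∈ P) := by
    intro a k ha hk hak
    exact union_trick P pB hpB (fun b => a * b) (fun b => b * k)
      (fun x y => mul_add a x y) (fun x y => add_mul x y k)
      (fun b hb => (F a b k ha hb hk).imp_right (fun o => o.resolve_right hak))
  have S2 : ∀ a, pA a → (∀ b, pB b → a * b ∈ P) ∨ (∀ k, pK k → a * k ∈ P) ∨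
      (∀ b k, pB b → pK k → b * k ∈ P) := by
    intro a ha
    by_cases hAB : ∀ b, pB b → a * b ∈ P
    · exact Or.inl hAB
    by_cases hAK : ∀ k, pK k → a * k ∈ P
    · exact Or.inr (Or.inl hAK)
    push_neg at hAB hAK
    obtain ⟨b0, hb0, hab0⟩ := hAB
    obtain ⟨k0, hk0, hak0⟩ := hAK
    have hb0K : ∀ k, pK k → b0 * k ∈ P :=
      (S1 a b0 ha hb0 hab0).resolve_left (fun h => hak0 (h k0 hk0))
    have hBk0 : ∀ b, pB b → b * k0 ∈ P :=
      (S1' a k0 ha hk0 hak0).resolve_left (fun h => hab0 (h b0 hb0))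
    refine Or.inr (Or.inr fun b k hb hk => ?_)
    by_cases hab : a * b ∈ P
    · by_cases hak : a * k ∈ P
      · have h1 : a * (b + b0) ∉ P := by
          intro h
          rw [mul_add] at h
          exact hab0 (by simpa using P.sub_mem h hab)
        have h2 := (S1 a (b + b0) ha (hpB _ _ hb hb0) h1).resolve_left
          (fun h => hak0 (h k0 hk0))
        have h3 : (b + b0) * k ∈ P := h2 k hk
        rw [add_mul] at h3
        simpa using P.sub_mem h3 (hb0K k hk)
      · exact ((S1' a k ha hk hak).resolve_left (fun h => hab0 (h b0 hb0))) b hb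
    · exact ((S1 a b ha hb hab).resolve_left (fun h => hak0 (h k0 hk0))) k hk
  by_contra hc
  push_neg at hc
  obtain ⟨⟨a1, k1, ha1, hk1, h1⟩, ⟨b2, k2, hb2, hk2, h2⟩, ⟨a3, b3, ha3, hb3, h3⟩⟩ := hc
  have key : ∀ a, pA a → (∀ b, pB b → a * b ∈ P) ∨ (∀ k, pK k → a * k ∈ P) := by
    intro a ha
    rcases S2 a ha with h | h | h
    exacts [Or.inl h, Or.inr h, absurd (h b2 k2 hb2 hk2) h2]
  have hA1 : ∀ b, pB b → a1 * b ∈ P := (key a1 ha1).resolve_right (fun h => h1 (h k1 hk1))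
  have hA3 : ∀ k, pK k → a3 * k ∈ P := (key a3 ha3).resolve_left (fun h => h3 (h b3 hb3))
  rcases key (a1 + a3) (hpA _ _ ha1 ha3) with h | h
  · have hx := h b3 hb3
    rw [add_mul] at hx
    exact h3 (by simpa using P.sub_mem hx (hA1 b3 hb3))
  · have hx := h k1 hk1
    rw [add_mul] at hx
    exact h1 (by simpa using P.sub_mem hx (hA3 k1 hk1))

/-- Theorem 4.15: if `P` is `g`-weakly 2-absorbing, `0 ≠ A_g B_g K_g ⊆ P` for graded ideals
`A, B, K` and `P` is free `g`-triple-zero with respect to `ABK`, then `A_g K_g ⊆ P` or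
`B_g K_g ⊆ P` or `A_g B_g ⊆ P`. -/
theorem stmt11 (𝒜 : G → AddSubgroup R) [GradedRing 𝒜] (g : G) (P : TwoSidedIdeal R)
    (hP : IsGWeakly2Absorbing 𝒜 g P) (A B K : TwoSidedIdeal R)
    (hA : IsGradedIdeal 𝒜 A) (hB : IsGradedIdeal 𝒜 B) (hK : IsGradedIdeal 𝒜 K)
    (hne : ∃ a ∈ A, a ∈ 𝒜 g ∧ ∃ b ∈ B, b ∈ 𝒜 g ∧ ∃ k ∈ K, k ∈ 𝒜 g ∧ a * b * k ≠ 0)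
    (hsub : ∀ a ∈ A, a ∈ 𝒜 g → ∀ b ∈ B, b ∈ 𝒜 g → ∀ k ∈ K, k ∈ 𝒜 g → a * b * k ∈ P)
    (hfree : ∀ x ∈ A, x ∈ 𝒜 g → ∀ y ∈ B, y ∈ 𝒜 g → ∀ z ∈ K, z ∈ 𝒜 g →
      ¬ IsGTripleZero 𝒜 g P x y z) :
    (∀ a ∈ A, a ∈ 𝒜 g → ∀ k ∈ K, k ∈ 𝒜 g → a * k ∈ P) ∨
    (∀ b ∈ B, b ∈ 𝒜 g → ∀ k ∈ K, k ∈ 𝒜 g → b * k ∈ P) ∨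
    (∀ a ∈ A, a ∈ 𝒜 g → ∀ b ∈ B, b ∈ 𝒜 g → a * b ∈ P) := by
  have memg : ∀ {x r : R}, x ∈ 𝒜 g → r ∈ 𝒜 0 → x * r ∈ 𝒜 g := by
    intro x r hx hr
    have := SetLike.mul_mem_graded hx hr
    simpa using this
  have F : ∀ a b k : R, (a ∈ A ∧ a ∈ 𝒜 g) → (b ∈ B ∧ b ∈ 𝒜 g) → (k ∈ K ∧ k ∈ 𝒜 g) →
      a * b ∈ P ∨ b * k ∈ P ∨ a * k ∈ P := by
    rintro a b k ⟨haA, hag⟩ ⟨hbB, hbg⟩ ⟨hkK, hkg⟩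
    have hsub' : ∀ r s : R, r ∈ 𝒜 0 → s ∈ 𝒜 0 → a * r * b * s * k ∈ P := by
      intro r s hr hs
      have h := hsub (a * r) (A.mul_mem_right a r haA) (memg hag hr)
        (b * s) (B.mul_mem_right b s hbB) (memg hbg hs) k hkK hkg
      have he : a * r * (b * s) * k = a * r * b * s * k := by
        rw [mul_assoc (a * r) b s]
      rwa [he] at h
    by_cases hz : ∀ r s : R, r ∈ 𝒜 0 → s ∈ 𝒜 0 → a * r * b * s * k = 0
    · have hf := hfree a haA hag b hbB hbg k hkK hkg
      rw [IsGTripleZero] at hf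
      push_neg at hf
      by_cases h1 : a * b ∈ P
      · exact Or.inl h1
      by_cases h2 : b * k ∈ P
      · exact Or.inr (Or.inl h2)
      exact Or.inr (Or.inr (hf hag hbg hkg hz h1 h2))
    · push_neg at hz
      exact hP.2.2 a b k hag hbg hkg hz hsub'
  rcases combin P (fun x => x ∈ A ∧ x ∈ 𝒜 g) (fun x => x ∈ B ∧ x ∈ 𝒜 g)
      (fun x => x ∈ K ∧ x ∈ 𝒜 g)
      (fun x y hx hy => ⟨A.add_mem hx.1 hy.1, (𝒜 g).add_mem hx.2 hy.2⟩)
      (fun x y hx hy => ⟨B.add_mem hx.1 hy.1, (𝒜 g).add_mem hx.2 hy.2⟩)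
      (fun x y hx hy => ⟨K.add_mem hx.1 hy.1, (𝒜 g).add_mem hx.2 hy.2⟩)
      F with h | h | h
  · exact Or.inl (fun a haA hag k hkK hkg => h a k ⟨haA, hag⟩ ⟨hkK, hkg⟩)
  · exact Or.inr (Or.inl (fun b hbB hbg k hkK hkg => h b k ⟨hbB, hbg⟩ ⟨hkK, hkg⟩))
  · exact Or.inr (Or.inr (fun a haA hag b hbB hbg => h a b ⟨haA, hag⟩ ⟨hbB, hbg⟩))
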